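/- Let A₂ > 0, m > 0, and for each large integer k consider g(R) = A₂/R^m - J(R)·e^{-2πR/k}·(k/R)^{(N-1)/2} on the interval S_k = [(m-δ₀)/(2π)·k log k, (m+δ₀)/(2π)·k log k], where 0 < δ₀ < m and 0 < B₀ ≤ J(R) ≤ B₁ for constants B₀, B₁ independent of R. Then for all sufficiently large k, the maximum of g over S_k is attained at an interior point of S_k. -/

import Mathlib

open Real Filter

private lemma aux_small (s b ε : ℝ) (hb : 0 < b) (hε : 0 < ε) :
    ∀ᶠ k : ℕ in atTop, (Real.log k) ^ s * (k : ℝ) ^ (-b) < ε := by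
  have h := tendsto_rpow_mul_exp_neg_mul_atTop_nhds_zero s b hb
  have hlog : Tendsto (fun k : ℕ => Real.log k) atTop atTop :=
    Real.tendsto_log_atTop.comp tendsto_natCast_atTop_atTop
  have h2 := (h.comp hlog).eventually_lt_const hε
  filter_upwards [h2, eventually_ge_atTop 2] with k hk hk2
  have hk0 : (0:ℝ) < (k:ℝ) := by positivity
  have : ((k:ℝ)) ^ (-b) = Real.exp (-b * Real.log k) := by
    rw [Real.rpow_def_of_pos hk0]; ring_nf
  rw [this]
  exact hk

private lemma aux_big (s b M : ℝ) (hb : 0 < b) :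
    ∀ᶠ k : ℕ in atTop, M < (Real.log k) ^ s * (k : ℝ) ^ b := by
  have hM' : 0 < max M 1 := lt_max_of_lt_right one_pos
  filter_upwards [aux_small (-s) b ((max M 1)⁻¹) hb (by positivity),
    eventually_ge_atTop 2] with k hk hk2
  have hk0 : (0:ℝ) < (k:ℝ) := by positivity
  have hL : 0 < Real.log k := Real.log_pos (by exact_mod_cast hk2)
  have hX : (0:ℝ) < (Real.log k) ^ s * (k : ℝ) ^ b := by positivity
  have key : (Real.log k) ^ (-s) * (k : ℝ) ^ (-b)
      = ((Real.log k) ^ s * (k : ℝ) ^ b)⁻¹ := by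
    rw [Real.rpow_neg hL.le, Real.rpow_neg hk0.le, mul_inv]
  rw [key] at hk
  have h3 := inv_strictAnti₀ (by positivity) hk
  simp only [inv_inv] at h3
  exact lt_of_le_of_lt (le_max_left M 1) h3

private lemma T_eval (q μ : ℝ) (hμ : 0 < μ) (k : ℕ) (hk : 2 ≤ k) :
    Real.exp (-2 * Real.pi * (μ / (2 * Real.pi) * k * Real.log k) / k) *
      ((k : ℝ) / (μ / (2 * Real.pi) * k * Real.log k)) ^ q
    = (k : ℝ) ^ (-μ) * ((2 * Real.pi / μ) ^ q / (Real.log k) ^ q) := by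
  have hk0 : (0:ℝ) < (k:ℝ) := by positivity
  have hL : 0 < Real.log k := Real.log_pos (by exact_mod_cast hk)
  have hπ : (0:ℝ) < Real.pi := Real.pi_pos
  have e1 : -2 * Real.pi * (μ / (2 * Real.pi) * k * Real.log k) / k
      = -μ * Real.log k := by
    field_simp
  have e2 : (k : ℝ) / (μ / (2 * Real.pi) * k * Real.log k)
      = (2 * Real.pi / μ) / Real.log k := by
    field_simp
  have e3 : Real.exp (-μ * Real.log k) = (k:ℝ) ^ (-μ) := by
    rw [Real.rpow_def_of_pos hk0]; ring_nf
  rw [e1, e2, e3, Real.div_rpow (by positivity) hL.le]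

/-- Final energy comparison step: for large k, the maximum over
S_k = [(m-δ₀)/(2π) k log k, (m+δ₀)/(2π) k log k] of
g(R) = A₂/R^m - J(R) e^{-2πR/k} (k/R)^{(N-1)/2},
with 0 < B₀ ≤ J ≤ B₁ and J continuous, is attained at an interior point of S_k. -/
theorem stmt17 (N : ℕ) (A₂ m δ₀ B₀ B₁ : ℝ) (hA₂ : 0 < A₂) (hm : 0 < m)
    (hδ₀ : 0 < δ₀) (hδ₀m : δ₀ < m) (hB₀ : 0 < B₀) (hB₁ : B₀ ≤ B₁)
    (J : ℝ → ℝ) (hJc : Continuous J) (hJ : ∀ R : ℝ, B₀ ≤ J R ∧ J R ≤ B₁) :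
    ∃ k₀ : ℕ, ∀ k : ℕ, k₀ ≤ k →
      ∃ R₀ ∈ Set.Ioo ((m - δ₀) / (2 * π) * k * Real.log k)
          ((m + δ₀) / (2 * π) * k * Real.log k),
        ∀ R ∈ Set.Icc ((m - δ₀) / (2 * π) * k * Real.log k)
            ((m + δ₀) / (2 * π) * k * Real.log k),
          A₂ / R ^ m - J R * Real.exp (-2 * π * R / k) * ((k : ℝ) / R) ^ (((N : ℝ) - 1) / 2)
            ≤ A₂ / R₀ ^ m -
              J R₀ * Real.exp (-2 * π * R₀ / k) * ((k : ℝ) / R₀) ^ (((N : ℝ) - 1) / 2) := by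
  have hπ : (0:ℝ) < π := Real.pi_pos
  set q : ℝ := ((N : ℝ) - 1) / 2 with hq
  have hmδ : 0 < m - δ₀ := by linarith
  have hB₁pos : 0 < B₁ := lt_of_lt_of_le hB₀ hB₁
  -- constants
  set C₁ : ℝ := ((m - δ₀) / (2 * π)) ^ m with hC₁
  set C₂ : ℝ := (2 * π / (m - δ₀)) ^ q with hC₂
  set C₂' : ℝ := (2 * π / (m + δ₀ / 2)) ^ q with hC₂'
  set Cb1 : ℝ := ((m + δ₀ / 2) / (2 * π)) ^ m with hCb1
  set Cb2 : ℝ := ((m + δ₀) / (2 * π)) ^ m with hCb2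
  have hC₁p : 0 < C₁ := Real.rpow_pos_of_pos (by positivity) m
  have hC₂p : 0 < C₂ := Real.rpow_pos_of_pos (by positivity) q
  have hC₂'p : 0 < C₂' := Real.rpow_pos_of_pos (by positivity) q
  have hCb1p : 0 < Cb1 := Real.rpow_pos_of_pos (by positivity) m
  have hCb2p : 0 < Cb2 := Real.rpow_pos_of_pos (by positivity) m
  have hCb12 : Cb1 < Cb2 := by
    apply Real.rpow_lt_rpow (by positivity) _ hm
    gcongr
    linarith
  set D : ℝ := A₂ * (Cb1⁻¹ - Cb2⁻¹) with hD
  have hDpos : 0 < D := by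
    have : Cb2⁻¹ < Cb1⁻¹ := inv_strictAnti₀ hCb1p hCb12
    have h : 0 < Cb1⁻¹ - Cb2⁻¹ := by linarith
    exact mul_pos hA₂ h
  have ev1 := aux_big (m - q) δ₀ (A₂ / (B₀ * C₁ * C₂)) hδ₀
  have ev2 := aux_small (m - q) (δ₀ / 2) (D / (B₁ * C₂')) (by positivity) (by positivity)
  rw [Filter.eventually_atTop] at ev1 ev2
  obtain ⟨k₁, hk₁⟩ := ev1
  obtain ⟨k₂, hk₂⟩ := ev2
  refine ⟨max 2 (max k₁ k₂), fun k hk => ?_⟩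
  have hk2 : 2 ≤ k := le_trans (le_max_left _ _) hk
  have h1 := hk₁ k (le_trans (le_trans (le_max_left _ _) (le_max_right _ _)) hk)
  have h2 := hk₂ k (le_trans (le_trans (le_max_right _ _) (le_max_right _ _)) hk)
  have hk0 : (0:ℝ) < (k:ℝ) := by positivity
  set L : ℝ := Real.log k with hLdef
  have hL : 0 < L := Real.log_pos (by exact_mod_cast hk2)
  set a : ℝ := (m - δ₀) / (2 * π) * k * L with ha
  set x₁ : ℝ := (m + δ₀ / 2) / (2 * π) * k * L with hx₁
  set b : ℝ := (m + δ₀) / (2 * π) * k * L with hb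
  have hprod : ∀ u v : ℝ, u < v → u / (2 * π) * k * L < v / (2 * π) * k * L := by
    intro u v huv
    have h0 : u / (2 * π) < v / (2 * π) := by gcongr <;> positivity
    exact mul_lt_mul_of_pos_right (mul_lt_mul_of_pos_right h0 hk0) hL
  have hax : a < x₁ := hprod _ _ (by linarith)
  have hxb : x₁ < b := hprod _ _ (by linarith)
  have hab : a ≤ b := le_of_lt (lt_trans hax hxb)
  have hapos : 0 < a := mul_pos (mul_pos (by positivity) hk0) hL
  have hxpos : 0 < x₁ := lt_trans hapos hax
  have hbpos : 0 < b := lt_trans hxpos hxb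
  set T : ℝ → ℝ := fun R => Real.exp (-2 * π * R / k) * ((k : ℝ) / R) ^ q with hT
  set g : ℝ → ℝ := fun R =>
    A₂ / R ^ m - J R * Real.exp (-2 * π * R / k) * ((k : ℝ) / R) ^ q with hg
  have hgT : ∀ R : ℝ, g R = A₂ / R ^ m - J R * T R := by
    intro R; simp only [hg, hT]; ring
  -- evaluations
  have Ta : T a = (k:ℝ) ^ (-(m - δ₀)) * (C₂ / L ^ q) :=
    T_eval q (m - δ₀) hmδ k hk2
  have Tx : T x₁ = (k:ℝ) ^ (-(m + δ₀ / 2)) * (C₂' / L ^ q) :=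
    T_eval q (m + δ₀ / 2) (by linarith) k hk2
  have ham : a ^ m = C₁ * ((k:ℝ) ^ m * L ^ m) := by
    rw [ha, Real.mul_rpow (by positivity) hL.le, Real.mul_rpow (by positivity) hk0.le, hC₁]
    ring
  have hx1m : x₁ ^ m = Cb1 * ((k:ℝ) ^ m * L ^ m) := by
    rw [hx₁, Real.mul_rpow (by positivity) hL.le, Real.mul_rpow (by positivity) hk0.le, hCb1]
    ring
  have hbm : b ^ m = Cb2 * ((k:ℝ) ^ m * L ^ m) := by
    rw [hb, Real.mul_rpow (by positivity) hL.le, Real.mul_rpow (by positivity) hk0.le, hCb2]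
    ring
  have hkm : (0:ℝ) < (k:ℝ) ^ m := Real.rpow_pos_of_pos hk0 m
  have hLm : (0:ℝ) < L ^ m := Real.rpow_pos_of_pos hL m
  have hLq : (0:ℝ) < L ^ q := Real.rpow_pos_of_pos hL q
  -- F1 : A₂ / a ^ m < B₀ * T a
  have F1 : A₂ / a ^ m < B₀ * T a := by
    rw [Ta, ham, div_lt_iff₀ (by positivity)]
    have h1' : A₂ < L ^ (m - q) * (k:ℝ) ^ δ₀ * (B₀ * C₁ * C₂) :=
      (div_lt_iff₀ (by positivity)).mp h1
    have e1 : (k:ℝ) ^ (-(m - δ₀)) * (k:ℝ) ^ m = (k:ℝ) ^ δ₀ := by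
      rw [← Real.rpow_add hk0]; ring_nf
    have e2 : L ^ (m - q) = L ^ m / L ^ q := Real.rpow_sub hL m q
    have eq : B₀ * ((k:ℝ) ^ (-(m - δ₀)) * (C₂ / L ^ q)) * (C₁ * ((k:ℝ) ^ m * L ^ m))
        = L ^ (m - q) * (k:ℝ) ^ δ₀ * (B₀ * C₁ * C₂) := by
      rw [e2, ← e1]; field_simp
    rw [eq]; exact h1'
  -- F2 : A₂ / b ^ m < A₂ / x₁ ^ m - B₁ * T x₁
  have F2 : A₂ / b ^ m < A₂ / x₁ ^ m - B₁ * T x₁ := by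
    have eq1 : A₂ / x₁ ^ m - A₂ / b ^ m = D * ((k:ℝ) ^ m * L ^ m)⁻¹ := by
      rw [hx1m, hbm, hD]; field_simp
    have e3 : (k:ℝ) ^ (-(m + δ₀ / 2)) = (k:ℝ) ^ (-(δ₀ / 2)) * ((k:ℝ) ^ m)⁻¹ := by
      rw [← Real.rpow_neg hk0.le m, ← Real.rpow_add hk0]; ring_nf
    have e2 : L ^ (m - q) = L ^ m / L ^ q := Real.rpow_sub hL m q
    have eq2 : B₁ * T x₁
        = L ^ (m - q) * (k:ℝ) ^ (-(δ₀ / 2)) * (B₁ * C₂') * ((k:ℝ) ^ m * L ^ m)⁻¹ := by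
      rw [Tx, e3, e2]; field_simp
    have h2' : L ^ (m - q) * (k:ℝ) ^ (-(δ₀ / 2)) * (B₁ * C₂') < D :=
      (lt_div_iff₀ (by positivity)).mp h2
    have hinv : (0:ℝ) < ((k:ℝ) ^ m * L ^ m)⁻¹ := by positivity
    have step := mul_lt_mul_of_pos_right h2' hinv
    rw [eq2]; linarith [eq1]
  -- positivity of T at points, g comparisons
  have hTpos : ∀ R : ℝ, 0 < R → 0 < T R := by
    intro R hR
    exact mul_pos (Real.exp_pos _) (Real.rpow_pos_of_pos (div_pos hk0 hR) q)
  have hga : g a ≤ A₂ / a ^ m - B₀ * T a := by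
    rw [hgT]
    have := mul_le_mul_of_nonneg_right (hJ a).1 (hTpos a hapos).le
    linarith
  have hgx : A₂ / x₁ ^ m - B₁ * T x₁ ≤ g x₁ := by
    rw [hgT]
    have := mul_le_mul_of_nonneg_right (hJ x₁).2 (hTpos x₁ hxpos).le
    linarith
  have hgb : g b < A₂ / b ^ m := by
    rw [hgT]
    have := mul_pos (lt_of_lt_of_le hB₀ (hJ b).1) (hTpos b hbpos)
    linarith
  have hbmpos : 0 < A₂ / b ^ m := div_pos hA₂ (Real.rpow_pos_of_pos hbpos m)
  have hganeg : g a < 0 := lt_of_le_of_lt hga (sub_neg.mpr F1)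
  have hgxpos : 0 < g x₁ := lt_of_lt_of_le (lt_trans hbmpos F2) hgx
  have hgax : g a < g x₁ := lt_trans hganeg hgxpos
  have hgbx : g b < g x₁ := lt_of_lt_of_le (lt_trans hgb F2) hgx
  -- continuity and max
  have hcont : ContinuousOn g (Set.Icc a b) := by
    have hpos' : ∀ x ∈ Set.Icc a b, (0:ℝ) < x := fun x hx => lt_of_lt_of_le hapos hx.1
    apply ContinuousOn.sub
    · exact continuousOn_const.div
        (ContinuousOn.rpow_const continuousOn_id (fun x hx => Or.inl (hpos' x hx).ne'))
        (fun x hx => (Real.rpow_pos_of_pos (hpos' x hx) m).ne')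
    · apply ContinuousOn.mul
      · exact (hJc.mul (Real.continuous_exp.comp ((continuous_const.mul continuous_id).div_const _))).continuousOn
      · exact ContinuousOn.rpow_const
          (continuousOn_const.div continuousOn_id (fun x hx => (hpos' x hx).ne'))
          (fun x hx => Or.inl (div_pos hk0 (hpos' x hx)).ne')
  obtain ⟨R₀, hR₀mem, hmax⟩ :=
    isCompact_Icc.exists_isMaxOn (Set.nonempty_Icc.mpr hab) hcont
  have hmax' : ∀ R ∈ Set.Icc a b, g R ≤ g R₀ := fun R hR => hmax hR
  have hx₁mem : x₁ ∈ Set.Icc a b := ⟨hax.le, hxb.le⟩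
  have hR₀a : a < R₀ := by
    rcases lt_or_eq_of_le hR₀mem.1 with h | h
    · exact h
    · exfalso; have := hmax' x₁ hx₁mem; rw [← h] at this; linarith
  have hR₀b : R₀ < b := by
    rcases lt_or_eq_of_le hR₀mem.2 with h | h
    · exact h
    · exfalso; have := hmax' x₁ hx₁mem; rw [h] at this; linarith
  exact ⟨R₀, ⟨hR₀a, hR₀b⟩, fun R hR => hmax' R hR⟩
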